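/- arXiv:math/0609157 — 3 statements merged into one kernel-verified Lean document; each statement's English description precedes it below -/
import Mathlib

section
/- Let X be a Banach space, α ∈ (0,1), γ > 0, M > 0, and let ζ : ℝ → X be a bounded continuous function with lim_{r→∞} (1/(2r)) ∫_{-r}^{r} ‖ζ(t)‖ dt = 0. Define Ψ(t) = ∫_{0}^{∞} k(s) ζ(t - s) ds where k(s) = M s^{-α} e^{-γ s}. Then lim_{r→∞} (1/(2r)) ∫_{-r}^{r} ‖Ψ(t)‖ dt = 0. -/
open Filter MeasureTheory Real

/-- The ergodic (Bohr mean zero) condition defining `AP₀(X)`. -/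
def ErgodicZero {X : Type*} [NormedAddCommGroup X] (f : ℝ → X) : Prop :=
  Tendsto (fun r : ℝ => (1 / (2 * r)) * ∫ t in (-r)..r, ‖f t‖) atTop (nhds 0)

theorem ap0_convolution_aux {X : Type*} [NormedAddCommGroup X] [NormedSpace ℝ X]
    [CompleteSpace X] (k : ℝ → ℝ) (hk_meas : Measurable k)
    (hk_pos : ∀ s ∈ Set.Ioi (0 : ℝ), 0 ≤ k s) (hk_int : IntegrableOn k (Set.Ioi 0))
    (ζ : ℝ → X) (hcont : Continuous ζ) (C : ℝ) (hC : ∀ t, ‖ζ t‖ ≤ C)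
    (hζ : ErgodicZero ζ) :
    ErgodicZero (fun t => ∫ s in Set.Ioi (0 : ℝ), k s • ζ (t - s)) := by
  have hC0 : 0 ≤ C := le_trans (norm_nonneg _) (hC 0)
  -- the primitive of ‖ζ‖
  set N : ℝ → ℝ := fun u => ∫ t in (0 : ℝ)..u, ‖ζ t‖ with hN
  have hζint : ∀ a b : ℝ, IntervalIntegrable (fun t => ‖ζ t‖) volume a b :=
    fun a b => (hcont.norm).intervalIntegrable a b
  have hNeq : ∀ a b : ℝ, (∫ t in a..b, ‖ζ t‖) = N b - N a := by
    intro a b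
    exact (intervalIntegral.integral_interval_sub_left (hζint 0 b) (hζint 0 a)).symm
  have hNcont : Continuous N := intervalIntegral.continuous_primitive hζint 0
  have hNmono : Monotone N := by
    intro a b hab
    have h1 : (0 : ℝ) ≤ ∫ t in a..b, ‖ζ t‖ :=
      intervalIntegral.integral_nonneg hab (fun t _ => norm_nonneg _)
    rw [hNeq] at h1; linarith
  -- the mean function of ζ
  set φ : ℝ → ℝ := fun u => (1 / (2 * u)) * (N u - N (-u)) with hφdef
  have hφ : Tendsto φ atTop (nhds 0) := by
    apply hζ.congr
    intro u
    rw [hNeq]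
  set Ψ : ℝ → X := fun t => ∫ s in Set.Ioi (0 : ℝ), k s • ζ (t - s) with hΨdef
  have hmeas_smul : ∀ t : ℝ, AEStronglyMeasurable (fun s => k s • ζ (t - s))
      (volume.restrict (Set.Ioi (0:ℝ))) := by
    intro t
    exact (hk_meas.aestronglyMeasurable).smul
      ((hcont.comp (continuous_const.sub continuous_id)).aestronglyMeasurable)
  -- Ψ is continuous
  have hΨc : Continuous Ψ := by
    apply continuous_of_dominated (bound := fun s => C * k s) (fun t => hmeas_smul t)
    · intro t
      filter_upwards [ae_restrict_mem measurableSet_Ioi] with s hs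
      rw [norm_smul, Real.norm_eq_abs, abs_of_nonneg (hk_pos s hs), mul_comm]
      exact mul_le_mul_of_nonneg_right (hC _) (hk_pos s hs)
    · exact hk_int.const_mul C
    · exact ae_of_all _ fun s =>
        continuous_const.smul (hcont.comp (continuous_id.sub continuous_const))
  -- pointwise bound on ‖Ψ‖
  set H : ℝ → ℝ := fun t => ∫ s in Set.Ioi (0 : ℝ), k s * ‖ζ (t - s)‖ with hHdef
  have hΨH : ∀ t, ‖Ψ t‖ ≤ H t := by
    intro t
    refine le_trans (norm_integral_le_integral_norm _) (le_of_eq ?_)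
    refine setIntegral_congr_fun measurableSet_Ioi (fun s hs => ?_)
    rw [norm_smul, Real.norm_eq_abs, abs_of_nonneg (hk_pos s hs)]
  -- the dominating family
  set G : ℝ → ℝ → ℝ := fun r s => k s * ((1 / (2 * r)) * (N (r - s) - N (-r - s))) with hGdef
  -- key inequality
  have key : ∀ r : ℝ, 0 < r →
      (1 / (2 * r)) * (∫ t in (-r)..r, ‖Ψ t‖) ≤ ∫ s in Set.Ioi (0:ℝ), G r s := by
    intro r hr
    have hrle : (-r : ℝ) ≤ r := by linarith
    have hprod : Integrable (fun p : ℝ × ℝ => k p.2 * ‖ζ (p.1 - p.2)‖)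
        ((volume.restrict (Set.Ioc (-r) r)).prod (volume.restrict (Set.Ioi 0))) := by
      have hmeas : AEStronglyMeasurable (fun p : ℝ × ℝ => k p.2 * ‖ζ (p.1 - p.2)‖)
          ((volume.restrict (Set.Ioc (-r) r)).prod (volume.restrict (Set.Ioi 0))) :=
        ((hk_meas.comp measurable_snd).mul
          ((hcont.norm.measurable).comp (measurable_fst.sub measurable_snd))).aestronglyMeasurable
      refine Integrable.mono' (g := fun p : ℝ × ℝ => (1:ℝ) * (C * k p.2)) ?_ hmeas ?_
      · exact (integrableOn_const (C := (1:ℝ)) (μ := volume) (s := Set.Ioc (-r) r) measure_Ioc_lt_top.ne).mul_prod (hk_int.const_mul C)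
      · rw [Measure.prod_restrict]
        filter_upwards [ae_restrict_mem (measurableSet_Ioc.prod measurableSet_Ioi)] with p hp
        have h2 : (0:ℝ) < p.2 := hp.2
        have hk2 : 0 ≤ k p.2 := hk_pos p.2 h2
        rw [Real.norm_eq_abs, abs_of_nonneg (mul_nonneg hk2 (norm_nonneg _)), one_mul]
        calc k p.2 * ‖ζ (p.1 - p.2)‖ ≤ k p.2 * C :=
              mul_le_mul_of_nonneg_left (hC _) hk2
          _ = C * k p.2 := mul_comm _ _
    have hswap := integral_integral_swap (f := fun t s => k s * ‖ζ (t - s)‖)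
      (μ := volume.restrict (Set.Ioc (-r) r)) (ν := volume.restrict (Set.Ioi 0)) hprod
    have hHint : IntegrableOn H (Set.Ioc (-r) r) := hprod.integral_prod_left
    have hΨint : IntegrableOn (fun t => ‖Ψ t‖) (Set.Ioc (-r) r) :=
      ((hΨc.norm).integrableOn_Icc).mono_set Set.Ioc_subset_Icc_self
    rw [intervalIntegral.integral_of_le hrle]
    have step1 : (∫ t in Set.Ioc (-r) r, ‖Ψ t‖) ≤ ∫ t in Set.Ioc (-r) r, H t :=
      setIntegral_mono_on hΨint hHint measurableSet_Ioc (fun t _ => hΨH t)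
    have step2 : (∫ t in Set.Ioc (-r) r, H t)
        = ∫ s in Set.Ioi (0:ℝ), ∫ t in Set.Ioc (-r) r, k s * ‖ζ (t - s)‖ := hswap
    have step3 : ∀ s ∈ Set.Ioi (0:ℝ),
        (1 / (2 * r)) * ∫ t in Set.Ioc (-r) r, k s * ‖ζ (t - s)‖ = G r s := by
      intro s _
      have h1 : (∫ t in Set.Ioc (-r) r, k s * ‖ζ (t - s)‖)
          = k s * ∫ t in Set.Ioc (-r) r, ‖ζ (t - s)‖ := by
        rw [integral_const_mul]
      have h2 : (∫ t in Set.Ioc (-r) r, ‖ζ (t - s)‖) = N (r - s) - N (-r - s) := by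
        rw [← intervalIntegral.integral_of_le hrle,
          intervalIntegral.integral_comp_sub_right (fun t => ‖ζ t‖) s, hNeq]
      rw [h1, h2, hGdef]; ring
    calc (1 / (2 * r)) * (∫ t in Set.Ioc (-r) r, ‖Ψ t‖)
        ≤ (1 / (2 * r)) * ∫ t in Set.Ioc (-r) r, H t := by
          apply mul_le_mul_of_nonneg_left step1; positivity
      _ = (1 / (2 * r)) * ∫ s in Set.Ioi (0:ℝ), ∫ t in Set.Ioc (-r) r, k s * ‖ζ (t - s)‖ := by
          rw [step2]
      _ = ∫ s in Set.Ioi (0:ℝ), (1 / (2 * r)) * ∫ t in Set.Ioc (-r) r, k s * ‖ζ (t - s)‖ := by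
          rw [integral_const_mul]
      _ = ∫ s in Set.Ioi (0:ℝ), G r s :=
          setIntegral_congr_fun measurableSet_Ioi step3
  -- the dominated convergence step
  have hI : Tendsto (fun r : ℝ => ∫ s in Set.Ioi (0:ℝ), G r s) atTop (nhds 0) := by
    have h0 : Tendsto (fun r : ℝ => ∫ s in Set.Ioi (0:ℝ), G r s) atTop
        (nhds (∫ _ in Set.Ioi (0:ℝ), (0:ℝ))) := by
      apply tendsto_integral_filter_of_dominated_convergence (bound := fun s => C * k s)
      · filter_upwards [eventually_gt_atTop (0:ℝ)] with r _
        refine Measurable.aestronglyMeasurable ?_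
        exact hk_meas.mul ((continuous_const.mul
          ((hNcont.comp (continuous_const.sub continuous_id)).sub
            (hNcont.comp (continuous_const.sub continuous_id)))).measurable)
      · filter_upwards [eventually_gt_atTop (0:ℝ)] with r hr
        filter_upwards [ae_restrict_mem measurableSet_Ioi] with s hs
        have hk2 : 0 ≤ k s := hk_pos s hs
        have hD0 : 0 ≤ N (r - s) - N (-r - s) := by
          have := hNmono (show -r - s ≤ r - s by linarith)
          linarith
        have hDle : N (r - s) - N (-r - s) ≤ 2 * r * C := by
          have h1 : |∫ t in (-r - s)..(r - s), ‖ζ t‖| ≤ C * |(r - s) - (-r - s)| :=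
            intervalIntegral.norm_integral_le_of_norm_le_const
              (f := fun t => ‖ζ t‖) (fun x _ => by
              rw [Real.norm_eq_abs, abs_of_nonneg (norm_nonneg _)]; exact hC x)
          rw [hNeq] at h1
          have h2 : |(r - s) - (-r - s)| = 2 * r := by rw [abs_of_nonneg] <;> linarith
          rw [h2] at h1
          have := le_of_abs_le h1
          linarith
        rw [Real.norm_eq_abs, hGdef, abs_of_nonneg (by positivity)]
        calc k s * (1 / (2 * r) * (N (r - s) - N (-r - s)))
            ≤ k s * (1 / (2 * r) * (2 * r * C)) := by
              apply mul_le_mul_of_nonneg_left _ hk2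
              apply mul_le_mul_of_nonneg_left hDle; positivity
          _ = k s * C := by field_simp
          _ = C * k s := mul_comm _ _
      · exact hk_int.const_mul C
      · filter_upwards [ae_restrict_mem measurableSet_Ioi] with s hs
        have hk2 : 0 ≤ k s := hk_pos s hs
        have hs0 : (0:ℝ) < s := hs
        -- squeeze between 0 and k s * ((r+s)/r * φ (r+s))
        have hup : Tendsto (fun r : ℝ => k s * ((r + s) / r * φ (r + s))) atTop (nhds 0) := by
          have h1 : Tendsto (fun r : ℝ => (r + s) / r) atTop (nhds 1) := by
            have h2 : Tendsto (fun r : ℝ => 1 + s / r) atTop (nhds (1 + 0)) :=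
              tendsto_const_nhds.add (tendsto_const_nhds.div_atTop tendsto_id)
            rw [add_zero] at h2
            apply h2.congr'
            filter_upwards [eventually_gt_atTop (0:ℝ)] with r hr
            field_simp
          have h3 : Tendsto (fun r : ℝ => φ (r + s)) atTop (nhds 0) :=
            hφ.comp (tendsto_atTop_add_const_right _ s tendsto_id)
          have h4 := (h1.mul h3).const_mul (k s)
          simpa using h4
        apply squeeze_zero' (g := fun r : ℝ => k s * ((r + s) / r * φ (r + s)))
        · filter_upwards [eventually_gt_atTop (0:ℝ)] with r hr
          have hD0 : 0 ≤ N (r - s) - N (-r - s) := by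
            have := hNmono (show -r - s ≤ r - s by linarith)
            linarith
          rw [hGdef]; positivity
        · filter_upwards [eventually_gt_atTop (0:ℝ)] with r hr
          have hrs : (0:ℝ) < r + s := by linarith
          have hDle : N (r - s) - N (-r - s) ≤ N (r + s) - N (-(r + s)) := by
            have h5 := hNmono (show r - s ≤ r + s by linarith)
            have h6 := hNmono (show -(r + s) ≤ -r - s by linarith)
            linarith
          have heq : k s * ((r + s) / r * φ (r + s))
              = k s * ((1 / (2 * r)) * (N (r + s) - N (-(r + s)))) := by
            rw [hφdef]
            have hrne : r ≠ 0 := ne_of_gt hr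
            have hrsne : r + s ≠ 0 := ne_of_gt hrs
            field_simp
          rw [heq, hGdef]
          apply mul_le_mul_of_nonneg_left _ hk2
          apply mul_le_mul_of_nonneg_left hDle
          positivity
        · exact hup
    simpa using h0
  -- conclude with squeeze
  apply squeeze_zero' (g := fun r : ℝ => ∫ s in Set.Ioi (0:ℝ), G r s)
  · filter_upwards [eventually_gt_atTop (0:ℝ)] with r hr
    have h1 : (0:ℝ) ≤ ∫ t in (-r)..r, ‖Ψ t‖ :=
      intervalIntegral.integral_nonneg (by linarith) (fun t _ => norm_nonneg _)
    positivity
  · filter_upwards [eventually_gt_atTop (0:ℝ)] with r hr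
    exact key r hr
  · exact hI

/-- Convolution with the weakly singular exponentially decaying kernel
`k(s) = M s^{-α} e^{-γ s}` maps `AP₀(X)` into itself. -/
theorem ap0_convolution_kernel {X : Type*} [NormedAddCommGroup X] [NormedSpace ℝ X]
    [CompleteSpace X] (α γ M : ℝ) (hα : 0 < α) (hα1 : α < 1) (hγ : 0 < γ) (hM : 0 < M)
    (ζ : ℝ → X) (hcont : Continuous ζ) (hbound : ∃ C, ∀ t, ‖ζ t‖ ≤ C)
    (hζ : ErgodicZero ζ) :
    ErgodicZero (fun t => ∫ s in Set.Ioi (0 : ℝ), (M * s ^ (-α) * exp (-γ * s)) • ζ (t - s)) := by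
  obtain ⟨C, hC⟩ := hbound
  have hk_meas : Measurable (fun s : ℝ => M * s ^ (-α) * exp (-γ * s)) := by
    apply Measurable.mul
    · exact measurable_const.mul (measurable_id.pow measurable_const)
    · exact (Real.continuous_exp.comp (continuous_const.mul continuous_id)).measurable
  have hk_pos : ∀ s ∈ Set.Ioi (0:ℝ), 0 ≤ M * s ^ (-α) * exp (-γ * s) := by
    intro s hs
    have : (0:ℝ) < s := hs
    positivity
  have hk_int : IntegrableOn (fun s : ℝ => M * s ^ (-α) * exp (-γ * s)) (Set.Ioi 0) := by
    have h1 := (integrableOn_rpow_mul_exp_neg_mul_rpow (s := -α) (p := 1) (b := γ)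
      (by linarith) one_pos hγ).const_mul M
    refine IntegrableOn.congr_fun h1 (fun s _ => ?_) measurableSet_Ioi
    rw [Real.rpow_one]; ring
  exact ap0_convolution_aux _ hk_meas hk_pos hk_int ζ hcont C hC hζ
end

section
/- The sum of two bounded continuous functions f = g + φ with g Bohr almost periodic and φ ∈ AP₀(X) is uniquely decomposed: if g₁ + φ₁ = g₂ + φ₂ with g₁, g₂ Bohr almost periodic and φ₁, φ₂ ∈ AP₀(X), then g₁ = g₂ and φ₁ = φ₂. -/
open Filter MeasureTheory

/-- Bohr almost periodicity. -/
def BohrAP {X : Type*} [NormedAddCommGroup X] (f : ℝ → X) : Prop :=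
  ∀ ε > (0 : ℝ), ∃ l > (0 : ℝ), ∀ a : ℝ, ∃ τ ∈ Set.Icc a (a + l),
    ∀ t : ℝ, ‖f (t + τ) - f t‖ < ε

/-- A continuous Bohr almost periodic function is uniformly continuous. -/
lemma BohrAP.uniformContinuous {X : Type*} [NormedAddCommGroup X] {g : ℝ → X}
    (hap : BohrAP g) (hc : Continuous g) : UniformContinuous g := by
  rw [Metric.uniformContinuous_iff]
  intro ε hε
  obtain ⟨l, hl, H⟩ := hap (ε / 3) (by positivity)
  have hK : IsCompact (Set.Icc (-1 : ℝ) (l + 1)) := isCompact_Icc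
  have hUC : UniformContinuousOn g (Set.Icc (-1 : ℝ) (l + 1)) :=
    hK.uniformContinuousOn_of_continuous hc.continuousOn
  rw [Metric.uniformContinuousOn_iff] at hUC
  obtain ⟨δ, hδ, hδ'⟩ := hUC (ε / 3) (by positivity)
  refine ⟨min δ 1, by positivity, ?_⟩
  intro t t' htt'
  have h1 : dist t t' < δ := lt_of_lt_of_le htt' (min_le_left _ _)
  have h2 : dist t t' < 1 := lt_of_lt_of_le htt' (min_le_right _ _)
  obtain ⟨τ, hτ, hτ'⟩ := H (-t')
  have hτ1 : -t' ≤ τ := hτ.1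
  have hτ2 : τ ≤ -t' + l := hτ.2
  have hmem' : t' + τ ∈ Set.Icc (-1 : ℝ) (l + 1) := by
    constructor <;> [linarith; linarith]
  have hmem : t + τ ∈ Set.Icc (-1 : ℝ) (l + 1) := by
    rw [Real.dist_eq, abs_lt] at h2
    constructor <;> [linarith; linarith]
  have hd : dist (t + τ) (t' + τ) < δ := by
    rw [Real.dist_eq] at h1 ⊢
    have : t + τ - (t' + τ) = t - t' := by ring
    rw [this]; exact h1
  have hmid : dist (g (t + τ)) (g (t' + τ)) < ε / 3 := hδ' _ hmem _ hmem' hd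
  have ha : ‖g (t + τ) - g t‖ < ε / 3 := hτ' t
  have hb : ‖g (t' + τ) - g t'‖ < ε / 3 := hτ' t'
  have key : dist (g t) (g t') ≤ dist (g t) (g (t + τ)) + dist (g (t + τ)) (g (t' + τ))
      + dist (g (t' + τ)) (g t') := dist_triangle4 _ _ _ _
  rw [dist_eq_norm, dist_eq_norm, dist_eq_norm, dist_eq_norm] at key
  rw [dist_eq_norm] at hmid ⊢
  have ha' : ‖g t - g (t + τ)‖ < ε / 3 := by rwa [norm_sub_rev] at ha
  linarith

/-- The difference of Bohr almost periodic functions (with the second uniformly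
continuous) is Bohr almost periodic. -/
lemma BohrAP.sub {X : Type*} [NormedAddCommGroup X] {f g : ℝ → X}
    (hf : BohrAP f) (hg : BohrAP g) (hgu : UniformContinuous g) :
    BohrAP (fun t => f t - g t) := by
  intro ε hε
  rw [Metric.uniformContinuous_iff] at hgu
  obtain ⟨δ, hδ, hδ'⟩ := hgu (ε / 8) (by positivity)
  obtain ⟨lf, hlf, Hf⟩ := hf (ε / 8) (by positivity)
  obtain ⟨lg, hlg, Hg⟩ := hg (ε / 8) (by positivity)
  choose τf hτf hτf' using Hf
  choose τg hτg hτg' using Hg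
  set ℓ : ℝ := max lf lg with hℓdef
  have hℓf : lf ≤ ℓ := le_max_left _ _
  have hℓg : lg ≤ ℓ := le_max_right _ _
  have hℓ : 0 < ℓ := lt_of_lt_of_le hlf hℓf
  set r : ℝ → ℝ := fun a => τf a - τg a with hrdef
  have hr : ∀ a, r a ∈ Set.Icc (-ℓ) ℓ := by
    intro a
    have h1 : a ≤ τf a := (hτf a).1
    have h2 : τf a ≤ a + lf := (hτf a).2
    have h3 : a ≤ τg a := (hτg a).1
    have h4 : τg a ≤ a + lg := (hτg a).2
    constructor
    · simp only [hrdef]; linarith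
    · simp only [hrdef]; linarith
  set c : ℝ → ℤ := fun a => ⌊(r a + ℓ) / δ⌋ with hcdef
  set N : ℤ := ⌊2 * ℓ / δ⌋ with hNdef
  have hN0 : 0 ≤ N := Int.floor_nonneg.mpr (by positivity)
  have hcmem : ∀ a, c a ∈ Finset.Icc (0 : ℤ) N := by
    intro a
    rw [Finset.mem_Icc]
    constructor
    · apply Int.floor_nonneg.mpr
      have := (hr a).1
      have : 0 ≤ r a + ℓ := by linarith
      positivity
    · apply Int.floor_le_floor
      have h2 := (hr a).2
      gcongr
      linarith
  classical
  set rep : ℤ → ℝ := fun k => if h : ∃ a, c a = k then h.choose else 0 with hrepdef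
  have hrep : ∀ k, (∃ a, c a = k) → c (rep k) = k := by
    intro k hk
    simp only [hrepdef, dif_pos hk]
    exact hk.choose_spec
  have hne : (Finset.Icc (0 : ℤ) N).Nonempty := ⟨0, by simp [hN0]⟩
  set A : ℝ := (Finset.Icc (0 : ℤ) N).sup' hne (fun k => |rep k|) with hAdef
  have hA : ∀ a, |rep (c a)| ≤ A := by
    intro a
    rw [hAdef]
    exact Finset.le_sup' (fun k => |rep k|) (hcmem a)
  have hA0 : 0 ≤ A := le_trans (abs_nonneg _) (hA 0)
  refine ⟨2 * (A + lf), by positivity, ?_⟩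
  intro a
  set b : ℝ := a + (A + lf) with hbdef
  set ρ : ℝ := rep (c b) with hρdef
  have hsame : c ρ = c b := hrep (c b) ⟨b, rfl⟩
  set τ : ℝ := τf b - τf ρ with hτdef
  have hρA : |ρ| ≤ A := hA b
  have hτmem : τ ∈ Set.Icc a (a + 2 * (A + lf)) := by
    have h1 : b ≤ τf b := (hτf b).1
    have h2 : τf b ≤ b + lf := (hτf b).2
    have h3 : ρ ≤ τf ρ := (hτf ρ).1
    have h4 : τf ρ ≤ ρ + lf := (hτf ρ).2
    rw [abs_le] at hρA
    constructor
    · simp only [hτdef, hbdef]; linarith [hρA.2]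
    · simp only [hτdef, hbdef]; linarith [hρA.1]
  refine ⟨τ, hτmem, ?_⟩
  -- closeness of the classes
  have hclose : |r b - r ρ| < δ := by
    have hfloor : ⌊(r b + ℓ) / δ⌋ = ⌊(r ρ + ℓ) / δ⌋ := hsame.symm
    set x : ℝ := (r b + ℓ) / δ with hxdef
    set y : ℝ := (r ρ + ℓ) / δ with hydef
    have hx1 : (⌊x⌋ : ℝ) ≤ x := Int.floor_le x
    have hx2 : x < ⌊x⌋ + 1 := Int.lt_floor_add_one x
    have hy1 : (⌊y⌋ : ℝ) ≤ y := Int.floor_le y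
    have hy2 : y < ⌊y⌋ + 1 := Int.lt_floor_add_one y
    have hxy : |x - y| < 1 := by
      rw [abs_lt]
      have he : (⌊x⌋ : ℝ) = (⌊y⌋ : ℝ) := by exact_mod_cast hfloor
      constructor <;> nlinarith
    have hrb : r b - r ρ = δ * (x - y) := by
      rw [hxdef, hydef]
      field_simp
      ring
    rw [hrb, abs_mul, abs_of_pos hδ]
    calc δ * |x - y| < δ * 1 := by exact mul_lt_mul_of_pos_left hxy hδ
      _ = δ := mul_one δ
  intro t
  -- f part
  have hfpart : ‖f (t + τ) - f t‖ < ε / 4 := by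
    have e1 : t + τ = (t - τf ρ) + τf b := by simp only [hτdef]; ring
    have e2 : t = (t - τf ρ) + τf ρ := by ring
    have h1 : ‖f ((t - τf ρ) + τf b) - f (t - τf ρ)‖ < ε / 8 := hτf' b (t - τf ρ)
    have h2 : ‖f ((t - τf ρ) + τf ρ) - f (t - τf ρ)‖ < ε / 8 := hτf' ρ (t - τf ρ)
    calc ‖f (t + τ) - f t‖
        = ‖(f ((t - τf ρ) + τf b) - f (t - τf ρ)) - (f ((t - τf ρ) + τf ρ) - f (t - τf ρ))‖ := by
          rw [← e1, ← e2]; congr 1; abel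
      _ ≤ ‖f ((t - τf ρ) + τf b) - f (t - τf ρ)‖ + ‖f ((t - τf ρ) + τf ρ) - f (t - τf ρ)‖ :=
          norm_sub_le _ _
      _ < ε / 4 := by linarith
  -- g part
  have hgpart : ‖g (t + τ) - g t‖ < ε / 2 := by
    set σ : ℝ := τg b - τg ρ with hσdef
    have hστ : dist (t + τ) (t + σ) < δ := by
      rw [Real.dist_eq]
      have : t + τ - (t + σ) = r b - r ρ := by simp only [hτdef, hσdef, hrdef]; ring
      rw [this]; exact hclose
    have h0 : ‖g (t + τ) - g (t + σ)‖ < ε / 8 := by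
      have := hδ' hστ
      rwa [dist_eq_norm] at this
    have e1 : t + σ = (t - τg ρ) + τg b := by simp only [hσdef]; ring
    have e2 : t = (t - τg ρ) + τg ρ := by ring
    have h1 : ‖g ((t - τg ρ) + τg b) - g (t - τg ρ)‖ < ε / 8 := hτg' b (t - τg ρ)
    have h2 : ‖g ((t - τg ρ) + τg ρ) - g (t - τg ρ)‖ < ε / 8 := hτg' ρ (t - τg ρ)
    have hσpart : ‖g (t + σ) - g t‖ < ε / 4 := by
      calc ‖g (t + σ) - g t‖
          = ‖(g ((t - τg ρ) + τg b) - g (t - τg ρ)) - (g ((t - τg ρ) + τg ρ) - g (t - τg ρ))‖ := by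
            rw [← e1, ← e2]; congr 1; abel
        _ ≤ ‖g ((t - τg ρ) + τg b) - g (t - τg ρ)‖ + ‖g ((t - τg ρ) + τg ρ) - g (t - τg ρ)‖ :=
            norm_sub_le _ _
        _ < ε / 4 := by linarith
    calc ‖g (t + τ) - g t‖ = ‖(g (t + τ) - g (t + σ)) + (g (t + σ) - g t)‖ := by congr 1; abel
      _ ≤ ‖g (t + τ) - g (t + σ)‖ + ‖g (t + σ) - g t‖ := norm_add_le _ _
      _ < ε / 2 := by linarith
  calc ‖(f (t + τ) - g (t + τ)) - (f t - g t)‖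
      = ‖(f (t + τ) - f t) - (g (t + τ) - g t)‖ := by congr 1; abel
    _ ≤ ‖f (t + τ) - f t‖ + ‖g (t + τ) - g t‖ := norm_sub_le _ _
    _ < ε := by linarith

/-- A continuous Bohr almost periodic function with zero Bohr mean of the norm
vanishes identically. -/
lemma BohrAP.eq_zero {X : Type*} [NormedAddCommGroup X] {h : ℝ → X}
    (hap : BohrAP h) (hc : Continuous h) (he : ErgodicZero h) : ∀ t, h t = 0 := by
  by_contra hne
  push_neg at hne
  obtain ⟨t₀, ht₀⟩ := hne
  set δ : ℝ := ‖h t₀‖ with hδdef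
  have hδ : 0 < δ := norm_pos_iff.mpr ht₀
  obtain ⟨l, hl, H⟩ := hap (δ / 4) (by positivity)
  obtain ⟨η, hη, hηs⟩ := Metric.continuousAt_iff.mp (hc.continuousAt (x := t₀)) (δ / 4)
    (by positivity)
  set L : ℝ := l + η with hLdef
  have hL : 0 < L := by positivity
  set cb : ℝ := η * (δ / 2) with hcbdef
  have hcb : 0 < cb := by positivity
  -- block estimate
  have block : ∀ a : ℝ, cb ≤ ∫ t in a..(a + L), ‖h t‖ := by
    intro a
    obtain ⟨τ, hτ, hτ'⟩ := H (a - t₀ + η / 2)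
    have hp1 : a + η / 2 ≤ t₀ + τ := by have := hτ.1; linarith
    have hp2 : t₀ + τ ≤ a + η / 2 + l := by have := hτ.2; linarith
    have key : ∀ s ∈ Set.Icc (t₀ + τ - η / 2) (t₀ + τ + η / 2), δ / 2 ≤ ‖h s‖ := by
      intro s hs
      have e : (s - τ) + τ = s := by ring
      have n1 : ‖h s - h (s - τ)‖ < δ / 4 := by
        have := hτ' (s - τ); rwa [e] at this
      have hd : dist (s - τ) t₀ < η := by
        rw [Real.dist_eq, abs_lt]
        constructor
        · have := hs.1; linarith
        · have := hs.2; linarith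
      have n2 : ‖h (s - τ) - h t₀‖ < δ / 4 := by
        have := hηs hd; rwa [dist_eq_norm] at this
      have n3 : ‖h t₀ - h s‖ ≤ ‖h t₀ - h (s - τ)‖ + ‖h (s - τ) - h s‖ := norm_sub_le_norm_sub_add_norm_sub _ _ _
      rw [norm_sub_rev] at n1 n2
      have n4 : ‖h t₀‖ - ‖h s‖ ≤ ‖h t₀ - h s‖ := norm_sub_norm_le _ _
      simp only [hδdef] at *
      linarith
    have hsub1 : a ≤ t₀ + τ - η / 2 := by linarith
    have hsub2 : t₀ + τ + η / 2 ≤ a + L := by simp only [hLdef]; linarith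
    have hmono : δ / 2 ≤ δ / 2 := le_refl _
    have int1 : ∫ _ in (t₀ + τ - η / 2)..(t₀ + τ + η / 2), (δ / 2)
        ≤ ∫ t in (t₀ + τ - η / 2)..(t₀ + τ + η / 2), ‖h t‖ := by
      apply intervalIntegral.integral_mono_on (by linarith)
        intervalIntegrable_const ((hc.norm).intervalIntegrable _ _) key
    have int0 : ∫ _ in (t₀ + τ - η / 2)..(t₀ + τ + η / 2), (δ / 2) = cb := by
      rw [intervalIntegral.integral_const]
      simp only [smul_eq_mul, hcbdef]
      ring
    have int2 : ∫ t in (t₀ + τ - η / 2)..(t₀ + τ + η / 2), ‖h t‖ ≤ ∫ t in a..(a + L), ‖h t‖ := by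
      apply intervalIntegral.integral_mono_interval hsub1 (by linarith) hsub2
      · filter_upwards with x using norm_nonneg _
      · exact (hc.norm).intervalIntegrable _ _
    linarith [int0 ▸ int1]
  -- sum estimate over 2n blocks
  have big : ∀ n : ℕ, (2 * n : ℝ) * cb ≤ ∫ t in (-(n : ℝ) * L)..((n : ℝ) * L), ‖h t‖ := by
    intro n
    set a : ℕ → ℝ := fun k => -(n : ℝ) * L + k * L with hadef
    have hsum : ∑ k ∈ Finset.range (2 * n), ∫ x in (a k)..(a (k + 1)), ‖h x‖
        = ∫ x in (a 0)..(a (2 * n)), ‖h x‖ :=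
      intervalIntegral.sum_integral_adjacent_intervals
        (fun k _ => (hc.norm).intervalIntegrable _ _)
    have ha0 : a 0 = -(n : ℝ) * L := by simp [hadef]
    have ha2n : a (2 * n) = (n : ℝ) * L := by simp only [hadef]; push_cast; ring
    have hterm : ∀ k ∈ Finset.range (2 * n), cb ≤ ∫ x in (a k)..(a (k + 1)), ‖h x‖ := by
      intro k _
      have : a (k + 1) = a k + L := by simp only [hadef]; push_cast; ring
      rw [this]
      exact block (a k)
    have hsum2 : (2 * n : ℝ) * cb ≤ ∑ k ∈ Finset.range (2 * n), ∫ x in (a k)..(a (k + 1)), ‖h x‖ := by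
      have := Finset.card_nsmul_le_sum (Finset.range (2 * n))
        (fun k => ∫ x in (a k)..(a (k + 1)), ‖h x‖) cb hterm
      simpa [nsmul_eq_mul, mul_comm] using this
    rw [hsum, ha0, ha2n] at hsum2
    exact hsum2
  -- contradiction with the ergodic zero condition
  have hev := Metric.tendsto_nhds.mp he (cb / L) (by positivity)
  rw [eventually_atTop] at hev
  obtain ⟨R, hR⟩ := hev
  set n : ℕ := max 1 ⌈R / L⌉₊ with hndef
  have hn1 : 1 ≤ n := le_max_left _ _
  have hnR : R ≤ (n : ℝ) * L := by
    have h1 : R / L ≤ (⌈R / L⌉₊ : ℝ) := Nat.le_ceil _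
    have h2 : (⌈R / L⌉₊ : ℝ) ≤ (n : ℝ) := by exact_mod_cast le_max_right 1 ⌈R / L⌉₊
    calc R = (R / L) * L := by field_simp
      _ ≤ (n : ℝ) * L := by apply mul_le_mul_of_nonneg_right (h1.trans h2) hL.le
  have hmean := hR ((n : ℝ) * L) hnR
  rw [Real.dist_eq, sub_zero] at hmean
  set m : ℝ := (1 / (2 * ((n : ℝ) * L))) * ∫ t in (-((n : ℝ) * L))..((n : ℝ) * L), ‖h t‖ with hmdef
  have hnpos : (0 : ℝ) < n := by exact_mod_cast hn1
  have hlow : cb / L ≤ m := by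
    have h1 : (2 * n : ℝ) * cb ≤ ∫ t in (-((n : ℝ) * L))..((n : ℝ) * L), ‖h t‖ := by
      have := big n
      rwa [neg_mul] at this
    have h2 : (0 : ℝ) < 2 * ((n : ℝ) * L) := by positivity
    have hn0 : (n : ℝ) ≠ 0 := ne_of_gt hnpos
    have hL0 : L ≠ 0 := ne_of_gt hL
    have key := mul_le_mul_of_nonneg_left h1
      (le_of_lt (by positivity : (0:ℝ) < 1 / (2 * ((n : ℝ) * L))))
    have e : (1 / (2 * ((n : ℝ) * L))) * ((2 * n : ℝ) * cb) = cb / L := by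
      field_simp
    rw [hmdef]
    linarith
  have : m ≤ |m| := le_abs_self m
  have hmean' : |m| < cb / L := hmean
  linarith

/-- Ergodic zero from pointwise norm domination by a sum of two ergodic-zero functions. -/
lemma ergodicZero_of_le {X : Type*} [NormedAddCommGroup X] {u v w : ℝ → X}
    (hu : Continuous u) (hv : Continuous v) (hw : Continuous w)
    (hb : ∀ t, ‖u t‖ ≤ ‖v t‖ + ‖w t‖)
    (h1 : ErgodicZero v) (h2 : ErgodicZero w) : ErgodicZero u := by
  have hsum := h1.add h2
  rw [add_zero] at hsum
  apply tendsto_of_tendsto_of_tendsto_of_le_of_le' tendsto_const_nhds hsum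
  · filter_upwards [eventually_gt_atTop (0 : ℝ)] with r hr
    have : (0 : ℝ) ≤ ∫ t in (-r)..r, ‖u t‖ :=
      intervalIntegral.integral_nonneg (by linarith) (fun t _ => norm_nonneg _)
    positivity
  · filter_upwards [eventually_gt_atTop (0 : ℝ)] with r hr
    have hint : ∫ t in (-r)..r, ‖u t‖ ≤ ∫ t in (-r)..r, (‖v t‖ + ‖w t‖) := by
      apply intervalIntegral.integral_mono_on (by linarith)
        ((hu.norm).intervalIntegrable _ _) (((hv.norm).add (hw.norm)).intervalIntegrable _ _)
      intro x _
      exact hb x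
    have hadd : ∫ t in (-r)..r, (‖v t‖ + ‖w t‖)
        = (∫ t in (-r)..r, ‖v t‖) + ∫ t in (-r)..r, ‖w t‖ :=
      intervalIntegral.integral_add ((hv.norm).intervalIntegrable _ _)
        ((hw.norm).intervalIntegrable _ _)
    calc (1 / (2 * r)) * ∫ t in (-r)..r, ‖u t‖
        ≤ (1 / (2 * r)) * ((∫ t in (-r)..r, ‖v t‖) + ∫ t in (-r)..r, ‖w t‖) := by
          apply mul_le_mul_of_nonneg_left (hint.trans_eq hadd)
          positivity
      _ = (1 / (2 * r)) * (∫ t in (-r)..r, ‖v t‖)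
          + (1 / (2 * r)) * ∫ t in (-r)..r, ‖w t‖ := by ring

/-- Uniqueness of the pseudo almost periodic decomposition: if
`g₁ + φ₁ = g₂ + φ₂` with `g₁, g₂` Bohr almost periodic and `φ₁, φ₂ ∈ AP₀(X)`,
then `g₁ = g₂` and `φ₁ = φ₂`. -/
theorem pap_decomposition_unique {X : Type*} [NormedAddCommGroup X] [NormedSpace ℝ X]
    (g₁ g₂ φ₁ φ₂ : ℝ → X)
    (hg₁ : BohrAP g₁) (hg₂ : BohrAP g₂)
    (hg₁c : Continuous g₁) (hg₂c : Continuous g₂)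
    (hφ₁c : Continuous φ₁) (hφ₂c : Continuous φ₂)
    (hφ₁b : ∃ C, ∀ t, ‖φ₁ t‖ ≤ C) (hφ₂b : ∃ C, ∀ t, ‖φ₂ t‖ ≤ C)
    (hφ₁ : ErgodicZero φ₁) (hφ₂ : ErgodicZero φ₂)
    (heq : ∀ t, g₁ t + φ₁ t = g₂ t + φ₂ t) :
    g₁ = g₂ ∧ φ₁ = φ₂ := by
  have hsub : ∀ t, g₁ t - g₂ t = φ₂ t - φ₁ t := by
    intro t
    have := heq t
    have h' : g₁ t + φ₁ t = φ₂ t + g₂ t := by rw [this]; abel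
    exact sub_eq_sub_iff_add_eq_add.mpr h'
  have hAP : BohrAP (fun t => g₁ t - g₂ t) :=
    BohrAP.sub hg₁ hg₂ (hg₂.uniformContinuous hg₂c)
  have hcont : Continuous (fun t => g₁ t - g₂ t) := hg₁c.sub hg₂c
  have hEZ : ErgodicZero (fun t => g₁ t - g₂ t) := by
    apply ergodicZero_of_le hcont hφ₁c hφ₂c ?_ hφ₁ hφ₂
    intro t
    rw [hsub t]
    calc ‖φ₂ t - φ₁ t‖ ≤ ‖φ₂ t‖ + ‖φ₁ t‖ := norm_sub_le _ _
      _ = ‖φ₁ t‖ + ‖φ₂ t‖ := by ring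
  have hz : ∀ t, g₁ t - g₂ t = 0 := BohrAP.eq_zero hAP hcont hEZ
  have hg : g₁ = g₂ := funext fun t => sub_eq_zero.mp (hz t)
  refine ⟨hg, funext fun t => ?_⟩
  have := heq t
  rw [hg] at this
  exact add_left_cancel this
end

section
/- If g : ℝ → X is Bohr almost periodic and g ∈ AP₀(X) (i.e. lim_{r→∞} (1/(2r)) ∫_{-r}^{r} ‖g(t)‖ dt = 0), then g ≡ 0. -/
open Filter MeasureTheory

/-- A Bohr almost periodic function lying in `AP₀(X)` vanishes identically. -/
theorem bohrAP_ergodicZero_eq_zero {X : Type*} [NormedAddCommGroup X] [NormedSpace ℝ X]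
    (g : ℝ → X) (hc : Continuous g) (hap : BohrAP g) (h0 : ErgodicZero g) :
    g = 0 := by
  by_contra hne
  obtain ⟨t₀, ht₀⟩ := Function.ne_iff.mp hne
  set c₀ := ‖g t₀‖ with hc₀def
  have hc₀ : 0 < c₀ := by simpa [hc₀def] using norm_pos_iff.mpr (by simpa using ht₀)
  -- continuity: a δ-neighbourhood where ‖g‖ > c₀/2
  have hcont : ∀ᶠ t in nhds t₀, c₀ / 2 < ‖g t‖ :=
    (hc.norm.continuousAt (x := t₀)).eventually (eventually_gt_nhds (by linarith))
  obtain ⟨δ, hδpos, hδ⟩ := Metric.eventually_nhds_iff.mp hcont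
  -- Bohr AP with ε = c₀/4
  obtain ⟨l, hlpos, hl⟩ := hap (c₀ / 4) (by linarith)
  set L : ℝ := l + δ with hLdef
  have hLpos : 0 < L := by positivity
  have hgint : ∀ a b : ℝ, IntervalIntegrable (fun t => ‖g t‖) volume a b :=
    fun a b => (hc.norm).intervalIntegrable a b
  -- each block of length L contributes at least δ * (c₀/4)
  have block : ∀ b : ℝ, δ * (c₀ / 4) ≤ ∫ t in b..(b + L), ‖g t‖ := by
    intro b
    obtain ⟨τ, hτmem, hτ⟩ := hl (b + δ / 2 - t₀)
    set c : ℝ := t₀ + τ - δ / 2 with hcdef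
    have hbc : b ≤ c := by
      have := hτmem.1; simp only [hcdef]; linarith
    have hcd : c ≤ c + δ := by linarith
    have hdb : c + δ ≤ b + L := by
      have := hτmem.2; simp only [hcdef, hLdef]; linarith
    have hlow : ∀ t ∈ Set.Icc c (c + δ), c₀ / 4 ≤ ‖g t‖ := by
      intro t ht
      have h1 : dist (t - τ) t₀ < δ := by
        rw [Real.dist_eq]
        have := ht.1; have := ht.2
        rw [abs_lt]
        constructor <;> simp only [hcdef] at * <;> linarith
      have h2 : c₀ / 2 < ‖g (t - τ)‖ := hδ h1
      have h3 : ‖g ((t - τ) + τ) - g (t - τ)‖ < c₀ / 4 := hτ (t - τ)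
      have h4 : ‖g (t - τ)‖ - ‖g t‖ ≤ ‖g ((t - τ) + τ) - g (t - τ)‖ := by
        have : (t - τ) + τ = t := by ring
        rw [this]
        exact (norm_sub_norm_le _ _).trans (by rw [norm_sub_rev])
      linarith
    have h5 : δ * (c₀ / 4) ≤ ∫ t in c..(c + δ), ‖g t‖ := by
      have := intervalIntegral.integral_mono_on (f := fun _ : ℝ => c₀ / 4)
        (g := fun t => ‖g t‖) (μ := volume) hcd (intervalIntegrable_const) (hgint c (c + δ))
        hlow
      simpa [mul_comm, mul_div_assoc] using this
    refine h5.trans (intervalIntegral.integral_mono_interval hbc hcd hdb ?_ (hgint b (b + L)))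
    filter_upwards with t using norm_nonneg _
  -- total lower bound over [-(m*L), m*L]
  have total : ∀ m : ℕ, (2 * m : ℝ) * (δ * (c₀ / 4)) ≤
      ∫ t in (-(m * L))..(m * L), ‖g t‖ := by
    intro m
    set a : ℕ → ℝ := fun k => -(m * L) + k * L with hadef
    have hsum := intervalIntegral.sum_integral_adjacent_intervals
      (f := fun t => ‖g t‖) (μ := volume) (a := a) (n := 2 * m)
      (fun k _ => hgint _ _)
    have ha0 : a 0 = -(m * L) := by simp [hadef]
    have han : a (2 * m) = m * L := by
      simp only [hadef]; push_cast; ring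
    rw [ha0, han] at hsum
    rw [← hsum]
    calc (2 * m : ℝ) * (δ * (c₀ / 4))
        = ∑ _k ∈ Finset.range (2 * m), (δ * (c₀ / 4)) := by
          simp only [Finset.sum_const, Finset.card_range, nsmul_eq_mul]; push_cast; ring
      _ ≤ ∑ k ∈ Finset.range (2 * m), ∫ t in a k..a (k + 1), ‖g t‖ := by
          refine Finset.sum_le_sum fun k _ => ?_
          have : a (k + 1) = a k + L := by simp only [hadef]; push_cast; ring
          rw [this]; exact block (a k)
  -- contradiction with the ergodic limit
  set K : ℝ := δ * c₀ / (4 * L) with hKdef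
  have hKpos : 0 < K := by positivity
  have hseq : Tendsto (fun m : ℕ => (m : ℝ) * L) atTop atTop :=
    (tendsto_natCast_atTop_atTop).atTop_mul_const hLpos
  have hcomp : Tendsto (fun m : ℕ =>
      (1 / (2 * ((m : ℝ) * L))) * ∫ t in (-((m : ℝ) * L))..((m : ℝ) * L), ‖g t‖)
      atTop (nhds 0) := h0.comp hseq
  have hlb : ∀ᶠ m : ℕ in atTop,
      K ≤ (1 / (2 * ((m : ℝ) * L))) * ∫ t in (-((m : ℝ) * L))..((m : ℝ) * L), ‖g t‖ := by
    filter_upwards [eventually_ge_atTop 1] with m hm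
    have hmpos : (0 : ℝ) < m := by exact_mod_cast hm
    have h1 : (0 : ℝ) < 2 * ((m : ℝ) * L) := by positivity
    have : (1 / (2 * ((m : ℝ) * L))) * ((2 * m : ℝ) * (δ * (c₀ / 4))) = K := by
      field_simp [hKdef]; rw [hKdef]; field_simp [hLpos.ne']
    calc K = (1 / (2 * ((m : ℝ) * L))) * ((2 * m : ℝ) * (δ * (c₀ / 4))) := this.symm
      _ ≤ _ := by
          apply mul_le_mul_of_nonneg_left (total m) (by positivity)
  have := ge_of_tendsto hcomp hlb
  linarith
end
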